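/- Let X be exponential with mean γ_AB and Y* the maximum of K i.i.d. exponentials with mean γ_AR, independent of X, with ρ > 0 and R ≥ 0. Then P((1 + ρX)/(1 + ρY*) < 2^R) = 1 − K Σ_{n=0}^{K−1} C(K−1, n)(−1)^n · (γ_AB/(2^R γ_AR + γ_AB(n+1))) · e^{−(2^R − 1)/(ρ γ_AB)}. -/

import Mathlib

/-! With `t = 2 ^ R`, `c = (t - 1) / ρ` and `S = max_i Y_i ≥ 0`, the event is the complement
of `{c + t S ≤ X}`. Given `X = x`, independence gives `P(S ≤ (x - c) / t) = F((x - c) / t) ^ K`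
with `F` the exponential CDF, so integrating against the density of `X` and expanding
`(1 - e^{-(x - c)/(t γAR)}) ^ K` binomially yields
`e^{-c/γAB} ∑_j C(K, j) (-1)^j t γAR / (t γAR + j γAB)`. The identity
`j C(K, j) = K C(K - 1, j - 1)` together with `∑_j (-1)^j C(K, j) = 0` turns this into the
stated sum. -/

open MeasureTheory ProbabilityTheory Real Set

lemma sum_range_choose_mul_neg_one_pow_mul_div {A B : ℝ} (hA : 0 < A) (hB : 0 ≤ B) {K : ℕ}
    (hK : K ≠ 0) :
    ∑ j ∈ Finset.range (K + 1), (K.choose j : ℝ) * (-1) ^ j * (A / (A + j * B))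
      = K * ∑ n ∈ Finset.range K,
          ((K - 1).choose n : ℝ) * (-1) ^ n * (B / (A + (n + 1) * B)) := by
  obtain ⟨m, rfl⟩ := Nat.exists_eq_add_one_of_ne_zero hK
  have hpos : ∀ j : ℕ, 0 < A + j * B := fun j => by positivity
  have hsplit : ∀ j : ℕ, ((m + 1).choose j : ℝ) * (-1) ^ j * (A / (A + j * B))
      = (-1) ^ j * ((m + 1).choose j : ℝ)
        - ((m + 1).choose j : ℝ) * j * ((-1) ^ j * B / (A + j * B)) := by
    intro j
    field_simp [(hpos j).ne']
    ring
  have halt : ∑ j ∈ Finset.range (m + 1 + 1), (-1 : ℝ) ^ j * ((m + 1).choose j : ℝ) = 0 :=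
    mod_cast Int.alternating_sum_range_choose_of_ne (Nat.succ_ne_zero m)
  rw [Finset.sum_congr rfl fun j _ => hsplit j, Finset.sum_sub_distrib, halt, zero_sub,
    Finset.sum_range_succ', Finset.mul_sum]
  simp only [Nat.cast_zero, mul_zero, zero_mul, add_zero, ← Finset.sum_neg_distrib,
    Nat.add_sub_cancel]
  refine Finset.sum_congr rfl fun n _ => ?_
  have hchoose : ((m + 1).choose (n + 1) : ℝ) * (n + 1) = (m + 1) * m.choose n := by
    exact_mod_cast (Nat.add_one_mul_choose_eq m n).symm
  push_cast
  linear_combination (-1) ^ n * B / (A + (n + 1) * B) * hchoose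

lemma integral_Ioi_one_sub_exp_pow_mul_exp {r b : ℝ} (hr : 0 < r) (hb : 0 ≤ b) (c : ℝ)
    (K : ℕ) :
    ∫ x in Ioi c, (1 - exp (-(b * (x - c)))) ^ K * (r * exp (-(r * x)))
      = exp (-(r * c)) * ∑ j ∈ Finset.range (K + 1),
          (K.choose j : ℝ) * (-1) ^ j * (r / (r + j * b)) := by
  have hpos : ∀ j : ℕ, 0 < r + j * b := fun j => by positivity
  have hexpand : ∀ x, (1 - exp (-(b * (x - c)))) ^ K * (r * exp (-(r * x)))
      = ∑ j ∈ Finset.range (K + 1),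
          (K.choose j : ℝ) * (-1) ^ j * r * exp (j * b * c) * exp (-(r + j * b) * x) := by
    intro x
    rw [sub_eq_neg_add, add_pow, Finset.sum_mul]
    refine Finset.sum_congr rfl fun j _ => ?_
    have hexp : exp (-(b * (x - c))) ^ j * exp (-(r * x))
        = exp (j * b * c) * exp (-(r + j * b) * x) := by
      rw [← exp_nat_mul, ← exp_add, ← exp_add]
      ring_nf
    rw [neg_pow, one_pow]
    linear_combination (K.choose j : ℝ) * (-1) ^ j * r * hexp
  have hterm : ∀ j : ℕ,
      ∫ x in Ioi c, exp (-(r + j * b) * x) = exp (-(r + j * b) * c) / (r + j * b) := by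
    intro j
    rw [integral_exp_mul_Ioi (by linarith [hpos j]), neg_mul, neg_div_neg_eq]
  simp_rw [hexpand]
  rw [integral_finsetSum _ fun j _ =>
    (integrableOn_exp_mul_Ioi (by linarith [hpos j]) c).const_mul _, Finset.mul_sum]
  refine Finset.sum_congr rfl fun j _ => ?_
  have hshift : exp (j * b * c) * exp (-(r + j * b) * c) = exp (-(r * c)) := by
    rw [← exp_add]
    ring_nf
  rw [integral_const_mul, hterm, ← hshift]
  ring

lemma setLIntegral_Ici_expMeasure {r c : ℝ} (hr : 0 < r) (hc : 0 ≤ c) {g : ℝ → ℝ}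
    (hg : Measurable g) (hg0 : ∀ x ∈ Ici c, 0 ≤ g x) (hg1 : ∀ x ∈ Ici c, g x ≤ 1) :
    ∫⁻ x in Ici c, ENNReal.ofReal (g x) ∂expMeasure r
      = ENNReal.ofReal (∫ x in Ici c, g x * (r * exp (-(r * x)))) := by
  have hpdf : ∀ x ∈ Ici c, (gammaPDF 1 r * fun y => ENNReal.ofReal (g y)) x
      = ENNReal.ofReal (g x * (r * exp (-(r * x)))) := by
    intro x hx
    change exponentialPDF r x * _ = _
    rw [exponentialPDF_of_nonneg (hc.trans hx), mul_comm, ENNReal.ofReal_mul (hg0 x hx)]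
  have hint : IntegrableOn (fun x => g x * (r * exp (-(r * x)))) (Ici c) := by
    refine Integrable.mono' (g := fun x => r * exp (-(r * x))) ?_ (by fun_prop)
      ((ae_restrict_iff' measurableSet_Ici).2 ?_)
    · rw [← IntegrableOn, integrableOn_Ici_iff_integrableOn_Ioi]
      have h := (exp_neg_integrableOn_Ioi c hr).const_mul r
      simp only [neg_mul] at h
      exact h
    · refine .of_forall fun x hx => ?_
      rw [norm_mul, Real.norm_of_nonneg (hg0 x hx), Real.norm_of_nonneg (by positivity)]
      exact mul_le_of_le_one_left (by positivity) (hg1 x hx)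
  have hpdf_meas : Measurable (gammaPDF 1 r) := (measurable_gammaPDFReal 1 r).ennreal_ofReal
  rw [expMeasure, gammaMeasure, setLIntegral_withDensity_eq_setLIntegral_mul _
    hpdf_meas hg.ennreal_ofReal measurableSet_Ici,
    setLIntegral_congr_fun measurableSet_Ici hpdf, ofReal_integral_eq_lintegral_ofReal hint]
  exact (ae_restrict_iff' measurableSet_Ici).2 (.of_forall fun x hx =>
    mul_nonneg (hg0 x hx) (by positivity))

lemma ae_nonneg_expMeasure (r : ℝ) : ∀ᵐ x ∂expMeasure r, 0 ≤ x := by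
  simp only [ae_iff, not_le]
  exact (withDensity_apply _ measurableSet_Iio).trans (lintegral_gammaPDF_of_nonpos le_rfl)

section

variable {Ω : Type*} [MeasurableSpace Ω] {μ : Measure Ω}

lemma measure_iSup_le_eq_prod {ι : Type*} [Fintype ι] [Nonempty ι] {Y : ι → Ω → ℝ}
    (hY : iIndepFun Y μ) (y : ℝ) :
    μ {ω | ⨆ i, Y i ω ≤ y} = ∏ i, μ {ω | Y i ω ≤ y} := by
  have hinter : {ω | ⨆ i, Y i ω ≤ y} = ⋂ i, Y i ⁻¹' Iic y := by
    ext ω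
    simp [ciSup_le_iff (Finite.bddAbove_range _)]
  rw [hinter, hY.meas_iInter fun i => ⟨Iic y, measurableSet_Iic, rfl⟩]
  rfl

lemma measure_iSup_le_of_map_eq_expMeasure {ι : Type*} [Fintype ι] [Nonempty ι] {r : ℝ}
    (hr : 0 < r) {Y : ι → Ω → ℝ} (hYm : ∀ i, AEMeasurable (Y i) μ)
    (hY : ∀ i, μ.map (Y i) = expMeasure r) (hind : iIndepFun Y μ) (y : ℝ) :
    μ {ω | ⨆ i, Y i ω ≤ y} = ENNReal.ofReal (cdf (expMeasure r) y ^ Fintype.card ι) := by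
  have : IsProbabilityMeasure (expMeasure r) := isProbabilityMeasure_expMeasure hr
  have hYI : ∀ i, μ {ω | Y i ω ≤ y} = ENNReal.ofReal (cdf (expMeasure r) y) := fun i => by
    rw [ofReal_cdf, ← hY i, Measure.map_apply_of_aemeasurable (hYm i) measurableSet_Iic]
    rfl
  rw [measure_iSup_le_eq_prod hind, Finset.prod_congr rfl fun i _ => hYI i, Finset.prod_const,
    Finset.card_univ, ENNReal.ofReal_pow (cdf_nonneg _ _)]

lemma measure_preimage_eq_lintegral_of_indepFun {α β : Type*} [MeasurableSpace α]
    [MeasurableSpace β] [IsFiniteMeasure μ] {X : Ω → α} {S : Ω → β} (hX : AEMeasurable X μ)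
    (hS : AEMeasurable S μ) (hXS : IndepFun X S μ) {E : Set (α × β)} (hE : MeasurableSet E) :
    μ ((fun ω => (X ω, S ω)) ⁻¹' E) = ∫⁻ x, μ.map S (Prod.mk x ⁻¹' E) ∂μ.map X := by
  rw [← Measure.map_apply_of_aemeasurable (hX.prodMk hS) hE,
    (indepFun_iff_map_prod_eq_prod_map_map hX hS).1 hXS, Measure.prod_apply hE]

lemma measureReal_ratio_lt_eq_one_sub [IsProbabilityMeasure μ] {ρ t : ℝ} (hρ : 0 < ρ)
    {X S : Ω → ℝ} (hX : Measurable X) (hS : Measurable S) (hS0 : ∀ᵐ ω ∂μ, 0 ≤ S ω) :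
    μ.real {ω | (1 + ρ * X ω) / (1 + ρ * S ω) < t}
      = 1 - μ.real {ω | (t - 1) / ρ + t * S ω ≤ X ω} := by
  have hevent : {ω | (1 + ρ * X ω) / (1 + ρ * S ω) < t}
      =ᵐ[μ] ({ω | (t - 1) / ρ + t * S ω ≤ X ω}ᶜ : Set Ω) := by
    refine Filter.eventuallyEq_set.2 ?_
    filter_upwards [hS0] with ω hω
    have hden : 0 < 1 + ρ * S ω := by positivity
    change _ < t ↔ ¬ (t - 1) / ρ + t * S ω ≤ X ω
    rw [div_lt_iff₀ hden, not_le, div_add' _ _ _ hρ.ne', lt_div_iff₀ hρ]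
    constructor <;> intro h <;> linarith
  rw [measureReal_congr hevent]
  exact probReal_compl_eq_one_sub (measurableSet_le (by fun_prop) hX)

lemma measureReal_add_mul_le_of_indepFun [IsProbabilityMeasure μ] {r q c t : ℝ} {K : ℕ}
    (hr : 0 < r) (hq : 0 < q) (hc : 0 ≤ c) (ht : 0 < t) (hK : K ≠ 0) {X S : Ω → ℝ}
    (hXm : Measurable X) (hSm : Measurable S) (hX : μ.map X = expMeasure r)
    (hS : ∀ y, μ {ω | S ω ≤ y} = ENNReal.ofReal (cdf (expMeasure q) y ^ K))
    (hXS : IndepFun X S μ) :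
    μ.real {ω | c + t * S ω ≤ X ω}
      = exp (-(r * c)) * ∑ j ∈ Finset.range (K + 1),
          (K.choose j : ℝ) * (-1) ^ j * (r / (r + j * (q / t))) := by
  set E : Set (ℝ × ℝ) := {p | c + t * p.2 ≤ p.1}
  have hE : MeasurableSet E := measurableSet_le (by fun_prop) measurable_fst
  have hb : 0 ≤ q / t := div_nonneg hq.le ht.le
  set g : ℝ → ℝ := fun x => (1 - exp (-(q / t * (x - c)))) ^ K
  have hbase : ∀ x ∈ Ici c, 0 ≤ 1 - exp (-(q / t * (x - c))) := fun x hx =>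
    sub_nonneg.2 (exp_le_one_iff.2 (neg_nonpos.2 (mul_nonneg hb (sub_nonneg.2 hx))))
  have hg0 : ∀ x ∈ Ici c, 0 ≤ g x := fun x hx => pow_nonneg (hbase x hx) K
  have hg1 : ∀ x ∈ Ici c, g x ≤ 1 := fun x hx =>
    pow_le_one₀ (hbase x hx) (sub_le_self _ (exp_pos _).le)
  have hslice : ∀ x,
      μ.map S (Prod.mk x ⁻¹' E) = (Ici c).indicator (fun x => ENNReal.ofReal (g x)) x := by
    intro x
    have hpre : S ⁻¹' (Prod.mk x ⁻¹' E) = {ω | S ω ≤ (x - c) / t} := by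
      ext ω
      change c + t * S ω ≤ x ↔ S ω ≤ (x - c) / t
      rw [le_div_iff₀ ht]
      constructor <;> intro h <;> linarith
    rw [Measure.map_apply hSm (measurable_prodMk_left hE), hpre, hS, cdf_expMeasure_eq hq]
    by_cases hx : x ∈ Ici c
    · rw [indicator_of_mem hx, if_pos (div_nonneg (sub_nonneg.2 hx) ht.le)]
      congr 4
      ring
    · rw [indicator_of_notMem hx, if_neg (by rwa [le_div_iff₀ ht, zero_mul, sub_nonneg]),
        zero_pow hK, ENNReal.ofReal_zero]
  rw [measureReal_def, show {ω | c + t * S ω ≤ X ω} = (fun ω => (X ω, S ω)) ⁻¹' E from rfl,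
    measure_preimage_eq_lintegral_of_indepFun hXm.aemeasurable hSm.aemeasurable hXS hE,
    lintegral_congr hslice, hX, lintegral_indicator measurableSet_Ici,
    setLIntegral_Ici_expMeasure hr hc (by fun_prop) hg0 hg1,
    ENNReal.toReal_ofReal (setIntegral_nonneg measurableSet_Ici fun x hx =>
      mul_nonneg (hg0 x hx) (by positivity)),
    integral_Ici_eq_integral_Ioi, integral_Ioi_one_sub_exp_pow_mul_exp hr hb]

end

/-- Eq. (55): SOP of direct transmission under relay antenna selection. `X` is
exponential with mean `γAB`, `Y*` is the maximum of `K` i.i.d. exponentials with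
mean `γAR`, independent of `X`. -/
theorem sop_DT_antenna_selection {Ω : Type*} [MeasurableSpace Ω] (μ : Measure Ω)
    [IsProbabilityMeasure μ] (γAB γAR ρ R : ℝ) (K : ℕ)
    (hAB : 0 < γAB) (hAR : 0 < γAR) (hρ : 0 < ρ) (hR : 0 ≤ R) (hK : 0 < K)
    (X : Ω → ℝ) (Y : Fin K → Ω → ℝ)
    (hXm : Measurable X) (hYm : ∀ i, Measurable (Y i))
    (hX : Measure.map X μ = expMeasure (1 / γAB))
    (hY : ∀ i, Measure.map (Y i) μ = expMeasure (1 / γAR))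
    (hYindep : iIndepFun Y μ)
    (hXY : IndepFun X (fun ω => ⨆ i, Y i ω) μ) :
    μ {ω | (1 + ρ * X ω) / (1 + ρ * ⨆ i, Y i ω) < (2 : ℝ) ^ R}
      = ENNReal.ofReal
          (1 - K * ∑ n ∈ Finset.range K,
              ((K - 1).choose n : ℝ) * (-1 : ℝ) ^ n
                * (γAB / ((2 : ℝ) ^ R * γAR + γAB * (n + 1)))
                * Real.exp (-((2 : ℝ) ^ R - 1) / (ρ * γAB))) := by
  have : NeZero K := ⟨hK.ne'⟩
  set t : ℝ := (2 : ℝ) ^ R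
  have ht : 1 ≤ t := one_le_rpow one_le_two hR
  set S : Ω → ℝ := fun ω => ⨆ i, Y i ω
  have hSm : Measurable S := Measurable.iSup hYm
  have hS0 : ∀ᵐ ω ∂μ, 0 ≤ S ω := by
    have hY0 := ae_of_ae_map (hYm 0).aemeasurable ((hY 0).symm ▸ ae_nonneg_expMeasure _)
    filter_upwards [hY0] with ω hω
    exact hω.trans (le_ciSup (Finite.bddAbove_range fun i => Y i ω) 0)
  have hS : ∀ y, μ {ω | S ω ≤ y} = ENNReal.ofReal (cdf (expMeasure (1 / γAR)) y ^ K) := by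
    simpa using measure_iSup_le_of_map_eq_expMeasure (by positivity)
      (fun i => (hYm i).aemeasurable) hY hYindep
  rw [← ofReal_measureReal, measureReal_ratio_lt_eq_one_sub hρ hXm hSm hS0,
    measureReal_add_mul_le_of_indepFun (by positivity) (by positivity)
      (div_nonneg (by linarith) hρ.le) (by positivity) hK.ne' hXm hSm hX hS hXY]
  have hterm : ∀ j : ℕ,
      1 / γAB / (1 / γAB + j * (1 / γAR / t)) = t * γAR / (t * γAR + j * γAB) := fun j => by
    field_simp
  have hexp : -(1 / γAB * ((t - 1) / ρ)) = -(t - 1) / (ρ * γAB) := by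
    field_simp
  simp only [hterm, hexp]
  rw [sum_range_choose_mul_neg_one_pow_mul_div (by positivity) hAB.le hK.ne']
  congr 2
  simp only [Finset.mul_sum]
  refine Finset.sum_congr rfl fun n _ => ?_
  ring
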